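/- arXiv:1303.0739 — 8 statements merged into one kernel-verified Lean document; each statement's English description precedes it below -/
import Mathlib

section
/- Let H be a separable Hilbert space with orthonormal basis (e_n). Let T be a compact Hermitian operator with real matrix entries T_{ij} = ⟨T e_j, e_i⟩ such that T_{11} = 0. Let c_1(T) denote the first column of T viewed as a vector in ℓ². Then the vectors v_± = (‖c_1(T)‖ e_1 ± c_1(T)) / (√2 ‖c_1(T)‖) are eigenvectors of T with eigenvalues ±‖c_1(T)‖, provided that for every n > 1, T_{nn} = -⟨c_1(T), c_n(T)⟩ / T_{1n} (with T_{1n} ≠ 0). -/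
open scoped InnerProductSpace
open ContinuousLinearMap

noncomputable section

variable {H : Type*} [NormedAddCommGroup H] [InnerProductSpace ℂ H] [CompleteSpace H]

/-- The absolute value `|A| = (A^*A)^{1/2}` of an operator. -/
def opAbs (A : H →L[ℂ] H) : H →L[ℂ] H := CFC.sqrt (ContinuousLinearMap.adjoint A * A)

/-- The trace of an operator computed in the Hilbert basis `e`. -/
def opTrace (e : HilbertBasis ℕ ℂ H) (A : H →L[ℂ] H) : ℂ := ∑' n, ⟪e n, A (e n)⟫_ℂ

/-- The trace norm `‖A‖₁ = tr |A|` computed in the Hilbert basis `e`. -/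
def traceNorm (e : HilbertBasis ℕ ℂ H) (A : H →L[ℂ] H) : ℝ :=
  ∑' n, (⟪e n, opAbs A (e n)⟫_ℂ).re

/-- `A` is trace class: the diagonal of `|A|` is summable. -/
def IsTraceClass (e : HilbertBasis ℕ ℂ H) (A : H →L[ℂ] H) : Prop :=
  Summable fun n => (⟪e n, opAbs A (e n)⟫_ℂ).re

/-- `D` is diagonal in the basis `e` with real diagonal entries. -/
def RealDiag (e : HilbertBasis ℕ ℂ H) (D : H →L[ℂ] H) : Prop :=
  ∀ n, ∃ d : ℝ, D (e n) = (d : ℂ) • e n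

/-- Distance from `C` to the compact real diagonal operators, in operator norm. -/
def diagDistK (e : HilbertBasis ℕ ℂ H) (C : H →L[ℂ] H) : ℝ :=
  ⨅ D : {D : H →L[ℂ] H // IsCompactOperator ⇑D ∧ RealDiag e D}, ‖C + (D : H →L[ℂ] H)‖

/-- Positive part `X⁺ = (|X| + X)/2`. -/
def opPosPart (X : H →L[ℂ] H) : H →L[ℂ] H := (2⁻¹ : ℂ) • (opAbs X + X)

/-- Negative part `X⁻ = (|X| - X)/2`. -/
def opNegPart (X : H →L[ℂ] H) : H →L[ℂ] H := (2⁻¹ : ℂ) • (opAbs X - X)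


lemma key_TTe (e : HilbertBasis ℕ ℂ H) (T : H →L[ℂ] H) (hsa : IsSelfAdjoint T)
    (horth : ∀ n, n ≠ 0 → ⟪T (e 0), T (e n)⟫_ℂ = 0) :
    T (T (e 0)) = ((‖T (e 0)‖^2 : ℝ) : ℂ) • e 0 := by
  apply e.repr.injective
  ext n
  rw [map_smul, lp.coeFn_smul, Pi.smul_apply, HilbertBasis.repr_self,
    HilbertBasis.repr_apply_apply, ← ContinuousLinearMap.adjoint_inner_left, hsa.adjoint_eq,
    smul_eq_mul, lp.single_apply]
  rcases eq_or_ne n 0 with rfl | hn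
  · rw [← inner_conj_symm, inner_self_eq_norm_sq_to_K]
    simp
  · rw [← inner_conj_symm, horth n hn]
    simp [hn]

/-- the vectors `v± = (‖c₁‖ e₁ ± c₁)/(√2 ‖c₁‖)` are eigenvectors of `T`
with eigenvalues `±‖c₁‖`. -/
theorem stmt_0 (e : HilbertBasis ℕ ℂ H) (T : H →L[ℂ] H)
    (hcomp : IsCompactOperator ⇑T) (hsa : IsSelfAdjoint T)
    (hreal : ∀ i j, (⟪e i, T (e j)⟫_ℂ).im = 0)
    (hdiag0 : ⟪e 0, T (e 0)⟫_ℂ = 0)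
    (hne : ∀ n, n ≠ 0 → ⟪e 0, T (e n)⟫_ℂ ≠ 0)
    (horth : ∀ n, n ≠ 0 → ⟪T (e 0), T (e n)⟫_ℂ = 0) :
    T ((((Real.sqrt 2 * ‖T (e 0)‖)⁻¹ : ℝ) : ℂ) • ((‖T (e 0)‖ : ℂ) • e 0 + T (e 0)))
      = (‖T (e 0)‖ : ℂ) •
        ((((Real.sqrt 2 * ‖T (e 0)‖)⁻¹ : ℝ) : ℂ) • ((‖T (e 0)‖ : ℂ) • e 0 + T (e 0))) ∧
    T ((((Real.sqrt 2 * ‖T (e 0)‖)⁻¹ : ℝ) : ℂ) • ((‖T (e 0)‖ : ℂ) • e 0 - T (e 0)))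
      = (-(‖T (e 0)‖ : ℂ)) •
        ((((Real.sqrt 2 * ‖T (e 0)‖)⁻¹ : ℝ) : ℂ) • ((‖T (e 0)‖ : ℂ) • e 0 - T (e 0))) := by
  have hk := key_TTe e T hsa horth
  push_cast at hk
  constructor
  · rw [map_smul, map_add, map_smul, hk]
    module
  · rw [map_smul, map_sub, map_smul, hk]
    module
end
end

section
/- Let T be a compact Hermitian operator on a separable Hilbert space with real matrix entries in a fixed orthonormal basis, satisfying: T_{11}=0, T_{1n} ≠ 0 for all n>1, every column c_n(T) with n>1 is orthogonal to c_1(T), and ‖c_1(T)‖ ≥ ‖T^{[1]}‖ where T^{[1]} is T with its first row and column replaced by zero. Then ‖T‖ = ‖c_1(T)‖. -/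
open scoped InnerProductSpace
open ContinuousLinearMap

noncomputable section

variable {H : Type*} [NormedAddCommGroup H] [InnerProductSpace ℂ H] [CompleteSpace H]

/-!
Put `c = T e₀`. Self-adjointness and the orthogonality of the columns give `T c = ‖c‖² e₀`, and
`T₀₀ = 0` says `c ⊥ e₀`; so `K = span {e₀, c}` is `T`-invariant and `T` acts on it as `‖c‖` times
an isometry. As `T` is self-adjoint, `Kᗮ` is invariant as well, and there `T` agrees with `T1`,
because `T - T1` is the rank-two operator `x ↦ ⟪e₀, x⟫ c + ⟪c, x⟫ e₀`. Hence `‖T‖ ≤ ‖c‖`, and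
`‖T e₀‖ = ‖c‖` gives the reverse inequality.
-/

section

variable {𝕜 E : Type*} [RCLike 𝕜] [NormedAddCommGroup E] [InnerProductSpace 𝕜 E]

theorem HilbertBasis.ext_of_inner {ι : Type*} (e : HilbertBasis ι 𝕜 E) {x y : E}
    (h : ∀ i, ⟪e i, x⟫_𝕜 = ⟪e i, y⟫_𝕜) : x = y :=
  e.repr.injective (by ext i; simpa [e.repr_apply_apply] using h i)

theorem HilbertBasis.ext_of_inner_apply {ι : Type*} (e : HilbertBasis ι 𝕜 E) {A B : E →L[𝕜] E}
    (h : ∀ i j, ⟪e i, A (e j)⟫_𝕜 = ⟪e i, B (e j)⟫_𝕜) : A = B := by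
  refine ContinuousLinearMap.ext_on
    (Submodule.dense_iff_topologicalClosure_eq_top.mpr e.dense_span) ?_
  rintro _ ⟨j, rfl⟩
  exact e.ext_of_inner (h · j)

theorem ContinuousLinearMap.opNorm_le_of_mem_invtSubmodule {T : E →L[𝕜] E}
    (hT : (T : E →ₗ[𝕜] E).IsSymmetric) (K : Submodule 𝕜 E) [K.HasOrthogonalProjection]
    (hK : K ∈ Module.End.invtSubmodule (T : E →ₗ[𝕜] E)) {a : ℝ} (ha : 0 ≤ a)
    (hK_le : ∀ x ∈ K, ‖T x‖ ≤ a * ‖x‖) (hKperp_le : ∀ x ∈ Kᗮ, ‖T x‖ ≤ a * ‖x‖) :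
    ‖T‖ ≤ a := by
  refine T.opNorm_le_bound ha fun x => ?_
  obtain ⟨y, hy, z, hz, rfl⟩ := K.exists_add_mem_mem_orthogonal x
  have hyz : ⟪y, z⟫_𝕜 = 0 := K.inner_right_of_mem_orthogonal hy hz
  have hTyz : ⟪T y, T z⟫_𝕜 = 0 :=
    K.inner_right_of_mem_orthogonal (hK hy) (hT.orthogonalComplement_mem_invtSubmodule hK hz)
  refine le_of_sq_le_sq ?_ (by positivity)
  calc ‖T (y + z)‖ ^ 2 = ‖T y‖ ^ 2 + ‖T z‖ ^ 2 := by
        rw [map_add, @norm_add_sq 𝕜, hTyz]; simp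
    _ ≤ (a * ‖y‖) ^ 2 + (a * ‖z‖) ^ 2 := by
        gcongr
        exacts [hK_le y hy, hKperp_le z hz]
    _ = (a * ‖y + z‖) ^ 2 := by
        simp only [mul_pow]
        rw [@norm_add_sq 𝕜, hyz]; simp; ring

theorem span_pair_mem_invtSubmodule {T : E →ₗ[𝕜] E} {u v : E} {a : 𝕜} (hTu : T u = v)
    (hTv : T v = a • u) : Submodule.span 𝕜 {u, v} ∈ Module.End.invtSubmodule T := by
  refine Submodule.span_le.mpr (Set.pair_subset ?_ ?_)
  · rw [SetLike.mem_coe, Submodule.mem_comap, hTu]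
    exact Submodule.subset_span (by simp)
  · rw [SetLike.mem_coe, Submodule.mem_comap, hTv]
    exact Submodule.smul_mem _ _ (Submodule.subset_span (by simp))

theorem norm_apply_eq_mul_norm_of_mem_span_pair {T : E →ₗ[𝕜] E} {u v : E} (hu : ‖u‖ = 1)
    (huv : ⟪u, v⟫_𝕜 = 0) (hTu : T u = v) (hTv : T v = ((‖v‖ ^ 2 : ℝ) : 𝕜) • u) {x : E}
    (hx : x ∈ Submodule.span 𝕜 {u, v}) : ‖T x‖ = ‖v‖ * ‖x‖ := by
  obtain ⟨α, β, rfl⟩ := Submodule.mem_span_pair.mp hx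
  have pythagoras (a b : 𝕜) : ‖a • u + b • v‖ ^ 2 = ‖a‖ ^ 2 + ‖b‖ ^ 2 * ‖v‖ ^ 2 := by
    rw [@norm_add_sq 𝕜, inner_smul_left, inner_smul_right, huv]
    simp [norm_smul, hu, mul_pow]
  have hTx : T (α • u + β • v) = (β * ((‖v‖ ^ 2 : ℝ) : 𝕜)) • u + α • v := by
    rw [map_add, map_smul, map_smul, hTu, hTv, smul_smul, add_comm]
  refine (sq_eq_sq₀ (norm_nonneg _) (by positivity)).mp ?_
  rw [hTx, pythagoras, mul_pow, pythagoras, norm_mul]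
  simp
  ring

theorem apply_apply_eq_norm_sq_smul {T : E →L[𝕜] E} (hT : (T : E →ₗ[𝕜] E).IsSymmetric)
    (e : HilbertBasis ℕ 𝕜 E) (horth : ∀ n, n ≠ 0 → ⟪T (e 0), T (e n)⟫_𝕜 = 0) :
    T (T (e 0)) = ((‖T (e 0)‖ ^ 2 : ℝ) : 𝕜) • e 0 := by
  refine e.ext_of_inner fun i => ?_
  rw [← hT.apply_clm, inner_smul_right, orthonormal_iff_ite.mp e.orthonormal]
  rcases eq_or_ne i 0 with rfl | hi
  · simp [inner_self_eq_norm_sq_to_K]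
  · rw [← inner_conj_symm, horth i hi, if_neg hi]
    simp

theorem apply_eq_add_of_inner_eq_ite {T T1 : E →L[𝕜] E} (hT : (T : E →ₗ[𝕜] E).IsSymmetric)
    (e : HilbertBasis ℕ 𝕜 E) (hdiag0 : ⟪e 0, T (e 0)⟫_𝕜 = 0)
    (hT1 : ∀ i j, ⟪e i, T1 (e j)⟫_𝕜 = if i = 0 ∨ j = 0 then 0 else ⟪e i, T (e j)⟫_𝕜) (x : E) :
    T x = T1 x + ⟪e 0, x⟫_𝕜 • T (e 0) + ⟪T (e 0), x⟫_𝕜 • e 0 := by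
  suffices T = T1 + (innerSL 𝕜 (e 0)).smulRight (T (e 0)) +
      (innerSL 𝕜 (T (e 0))).smulRight (e 0) from
    DFunLike.congr_fun this x
  refine e.ext_of_inner_apply fun i j => ?_
  have hee := orthonormal_iff_ite.mp e.orthonormal
  have hrow : ⟪T (e 0), e j⟫_𝕜 = ⟪e 0, T (e j)⟫_𝕜 := hT (e 0) (e j)
  simp only [add_apply, ContinuousLinearMap.smulRight_apply, innerSL_apply_apply,
    inner_add_right, inner_smul_right, hT1, hee, hrow]
  by_cases hi : i = 0 <;> by_cases hj : j = 0 <;> simp [hi, hj, hdiag0, @eq_comm ℕ 0]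

end

theorem stmt_1_general (e : HilbertBasis ℕ ℂ H) (T T1 : H →L[ℂ] H)
    (hsa : IsSelfAdjoint T)
    (hdiag0 : ⟪e 0, T (e 0)⟫_ℂ = 0)
    (horth : ∀ n, n ≠ 0 → ⟪T (e 0), T (e n)⟫_ℂ = 0)
    (hT1 : ∀ i j, ⟪e i, T1 (e j)⟫_ℂ = if i = 0 ∨ j = 0 then 0 else ⟪e i, T (e j)⟫_ℂ)
    (hnorm : ‖T1‖ ≤ ‖T (e 0)‖) :
    ‖T‖ = ‖T (e 0)‖ := by
  have hT := hsa.isSymmetric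
  have hTc := apply_apply_eq_norm_sq_smul hT e horth
  set c := T (e 0)
  set K := Submodule.span ℂ {e 0, c}
  have : FiniteDimensional ℂ K := FiniteDimensional.span_of_finite ℂ (Set.toFinite _)
  refine le_antisymm (T.opNorm_le_of_mem_invtSubmodule hT K (span_pair_mem_invtSubmodule rfl hTc)
    (norm_nonneg c) (fun x hx => ?_) (fun x hx => ?_)) ?_
  · exact (norm_apply_eq_mul_norm_of_mem_span_pair (e.orthonormal.1 0) hdiag0 rfl hTc hx).le
  · have hx0 : ⟪e 0, x⟫_ℂ = 0 := hx _ (Submodule.subset_span (Set.mem_insert _ _))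
    have hxc : ⟪c, x⟫_ℂ = 0 := hx _ (Submodule.subset_span (Set.mem_insert_of_mem _ rfl))
    calc ‖T x‖ = ‖T1 x‖ := by
          rw [apply_eq_add_of_inner_eq_ite hT e hdiag0 hT1 x, hx0, hxc]; simp
      _ ≤ ‖T1‖ * ‖x‖ := T1.le_opNorm x
      _ ≤ ‖c‖ * ‖x‖ := by gcongr
  · simpa [e.orthonormal.1 0] using T.le_opNorm (e 0)

/-- under the structural hypotheses, `‖T‖ = ‖c₁(T)‖`. -/
theorem stmt_1 (e : HilbertBasis ℕ ℂ H) (T T1 : H →L[ℂ] H)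
    (hcomp : IsCompactOperator ⇑T) (hsa : IsSelfAdjoint T)
    (hreal : ∀ i j, (⟪e i, T (e j)⟫_ℂ).im = 0)
    (hdiag0 : ⟪e 0, T (e 0)⟫_ℂ = 0)
    (hne : ∀ n, n ≠ 0 → ⟪e 0, T (e n)⟫_ℂ ≠ 0)
    (horth : ∀ n, n ≠ 0 → ⟪T (e 0), T (e n)⟫_ℂ = 0)
    (hT1 : ∀ i j, ⟪e i, T1 (e j)⟫_ℂ = if i = 0 ∨ j = 0 then 0 else ⟪e i, T (e j)⟫_ℂ)
    (hnorm : ‖T1‖ ≤ ‖T (e 0)‖) :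
    ‖T‖ = ‖T (e 0)‖ :=
  stmt_1_general e T T1 hsa hdiag0 horth hT1 hnorm
end
end

section
/- Let T be a compact Hermitian operator on a separable Hilbert space with real matrix entries in a fixed orthonormal basis, satisfying T_{11}=0, T_{1n} ≠ 0 for all n>1, ⟨c_1(T), c_n(T)⟩ = 0 for all n>1, and ‖c_1(T)‖ ≥ ‖T^{[1]}‖. Then T is minimal with respect to compact real diagonal perturbations: ‖T‖ ≤ ‖T + D‖ for every compact real diagonal operator D. Moreover the zero diagonal is the unique bounded real diagonal D' for which T + D' attains inf_{D} ‖T + D‖. -/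
open scoped InnerProductSpace
open ContinuousLinearMap

noncomputable section

variable {H : Type*} [NormedAddCommGroup H] [InnerProductSpace ℂ H] [CompleteSpace H]

/-!
Put `c = ‖T e₀‖`. Self-adjointness and `⟪T e₀, T eₙ⟫ = 0` for `n ≠ 0` give `T (T e₀) = c² e₀`,
so with the unit vector `u = T e₀ / c`, orthogonal to `e₀` because `⟪e₀, T e₀⟫ = 0`, the operator
`T` acts as `c` times the swap `e₀ ↔ u`. On the orthogonal complement of `{e₀, u}` it agrees with `T^{[1]}`,
whose norm is at most `c`, hence `‖T‖ ≤ c`. For every real diagonal `D` we have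
`⟪e₀, (T + D) u⟫ = c`, because `⟪e₀, D u⟫ = d₀ ⟪e₀, u⟫ = 0`; so `‖T + D‖ ≥ c`. If `‖T + D'‖ ≤ c`,
equality in Cauchy–Schwarz forces `(T + D') u = c e₀ = T u` and `(T + D') e₀ = c u = T e₀`, so `D'`
kills `e₀ + u`. All coordinates of `e₀ + u` are nonzero (they are `1` and `⟪eₙ, T e₀⟫ / c`), so every
diagonal entry of `D'` vanishes.
-/

namespace HilbertBasis

variable {ι 𝕜 E F : Type*} [RCLike 𝕜] [NormedAddCommGroup E] [InnerProductSpace 𝕜 E]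
  [NormedAddCommGroup F] [NormedSpace 𝕜 F] (b : HilbertBasis ι 𝕜 E)

theorem ext_inner {x y : E} (h : ∀ i, ⟪b i, x⟫_𝕜 = ⟪b i, y⟫_𝕜) : x = y := by
  have hx := b.hasSum_repr x
  have hy := b.hasSum_repr y
  simp only [HilbertBasis.repr_apply_apply, h] at hx hy
  exact hx.unique hy

theorem ext_continuousLinearMap {A B : E →L[𝕜] F} (h : ∀ i, A (b i) = B (b i)) : A = B :=
  ContinuousLinearMap.ext_on (Submodule.dense_iff_topologicalClosure_eq_top.mpr b.dense_span)
    (by rintro _ ⟨i, rfl⟩; exact h i)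

theorem ext_inner_apply {A B : E →L[𝕜] E} (h : ∀ i j, ⟪b i, A (b j)⟫_𝕜 = ⟪b i, B (b j)⟫_𝕜) :
    A = B :=
  b.ext_continuousLinearMap fun j => b.ext_inner fun i => h i j

theorem apply_eq_of_inner_apply_eq_ite [DecidableEq ι] {A B : E →L[𝕜] E} (i₀ : ι)
    (hB : ∀ i j, ⟪b i, B (b j)⟫_𝕜 = if i = i₀ ∨ j = i₀ then 0 else ⟪b i, A (b j)⟫_𝕜)
    {z : E} (hz : ⟪b i₀, z⟫_𝕜 = 0) (hAz : ⟪b i₀, A z⟫_𝕜 = 0) : B z = A z := by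
  set Q : E →L[𝕜] E := ContinuousLinearMap.id 𝕜 E - (innerSL 𝕜 (b i₀)).smulRight (b i₀)
  have hQ : ∀ x, Q x = x - ⟪b i₀, x⟫_𝕜 • b i₀ := fun _ => rfl
  have hbb := orthonormal_iff_ite.mp b.orthonormal
  have hb₀ : ‖b i₀‖ = 1 := b.orthonormal.1 i₀
  have hBQ : B = Q ∘L A ∘L Q := by
    refine b.ext_inner_apply fun i j => ?_
    rw [hB]
    by_cases hj : j = i₀
    · simp [hQ, hj, hb₀]
    by_cases hi : i = i₀
    · simp [hQ, hi, hj, hbb, hb₀, Ne.symm hj, inner_sub_right, inner_smul_right]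
    · simp [hQ, hi, hj, hbb, Ne.symm hj, inner_sub_right, inner_smul_right]
  simp [hBQ, hQ, hz, hAz]

end HilbertBasis

section Operator

variable {𝕜 E F : Type*} [RCLike 𝕜] [NormedAddCommGroup E] [InnerProductSpace 𝕜 E]
  [NormedAddCommGroup F] [InnerProductSpace 𝕜 F]

theorem eq_smul_of_inner_eq_of_norm_le {x v : E} {c : ℝ} (hx : ‖x‖ = 1) (hv : ‖v‖ ≤ c)
    (h : ⟪x, v⟫_𝕜 = c) : v = (c : 𝕜) • x := by
  have hc : c ≤ ‖v‖ := by
    simpa [h, hx, abs_of_nonneg ((norm_nonneg v).trans hv)] using norm_inner_le_norm (𝕜 := 𝕜) x v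
  have hvc : ‖v‖ = c := le_antisymm hv hc
  have hcs := (inner_eq_norm_mul_iff (𝕜 := 𝕜) (x := x) (y := v)).mp (by simp [h, hx, hvc])
  simpa [hx, hvc] using hcs.symm

theorem le_opNorm_of_inner_apply_eq {A : E →L[𝕜] E} {x y : E} {c : ℝ} (hx : ‖x‖ = 1)
    (hy : ‖y‖ = 1) (h : ⟪x, A y⟫_𝕜 = c) : c ≤ ‖A‖ :=
  calc c ≤ ‖⟪x, A y⟫_𝕜‖ := by simpa [h] using le_abs_self c
    _ ≤ ‖x‖ * ‖A y‖ := norm_inner_le_norm x (A y)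
    _ ≤ ‖A‖ := by simpa [hx, hy] using A.le_opNorm y

theorem apply_eq_of_inner_apply_eq_of_opNorm_le {A : E →L[𝕜] E} {x y : E} {c : ℝ}
    (hx : ‖x‖ = 1) (hy : ‖y‖ = 1) (hA : ‖A‖ ≤ c) (h : ⟪x, A y⟫_𝕜 = c) : A y = (c : 𝕜) • x := by
  refine eq_smul_of_inner_eq_of_norm_le hx ?_ h
  simpa [hy] using A.le_of_opNorm_le hA y

theorem norm_apply_add_le_of_inner_eq_zero (A : E →L[𝕜] F) {c : ℝ} (hc : 0 ≤ c) {y z : E}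
    (hyz : ⟪y, z⟫_𝕜 = 0) (hAyz : ⟪A y, A z⟫_𝕜 = 0) (hy : ‖A y‖ ≤ c * ‖y‖)
    (hz : ‖A z‖ ≤ c * ‖z‖) : ‖A (y + z)‖ ≤ c * ‖y + z‖ := by
  have hA := norm_add_sq_eq_norm_sq_add_norm_sq_of_inner_eq_zero _ _ hAyz
  have hyz' := norm_add_sq_eq_norm_sq_add_norm_sq_of_inner_eq_zero _ _ hyz
  rw [← map_add] at hA
  have hcy : 0 ≤ c * ‖y‖ := (norm_nonneg _).trans hy
  have hcz : 0 ≤ c * ‖z‖ := (norm_nonneg _).trans hz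
  refine (sq_le_sq₀ (norm_nonneg _) (by positivity)).mp ?_
  calc ‖A (y + z)‖ ^ 2 = ‖A y‖ * ‖A y‖ + ‖A z‖ * ‖A z‖ := by rw [sq, hA]
    _ ≤ c * ‖y‖ * (c * ‖y‖) + c * ‖z‖ * (c * ‖z‖) :=
      add_le_add (mul_le_mul hy hy (norm_nonneg _) hcy) (mul_le_mul hz hz (norm_nonneg _) hcz)
    _ = (c * ‖y + z‖) ^ 2 := by rw [mul_pow, sq ‖y + z‖, hyz']; ring

theorem exists_unit_swap_of_apply_apply_eq {A : E →L[𝕜] E} {x : E} (hAx0 : A x ≠ 0)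
    (hxAx : ⟪x, A x⟫_𝕜 = 0) (hAAx : A (A x) = ((‖A x‖ ^ 2 : ℝ) : 𝕜) • x) :
    ∃ y, ‖y‖ = 1 ∧ ⟪x, y⟫_𝕜 = 0 ∧ A x = (‖A x‖ : 𝕜) • y ∧ A y = (‖A x‖ : 𝕜) • x := by
  have hc : (‖A x‖ : 𝕜) ≠ 0 := by simpa using hAx0
  refine ⟨(‖A x‖ : 𝕜)⁻¹ • A x, norm_smul_inv_norm hAx0, ?_, ?_, ?_⟩
  · simp [inner_smul_right, hxAx]
  · rw [smul_smul, mul_inv_cancel₀ hc, one_smul]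
  · rw [map_smul, hAAx, smul_smul]
    congr 1
    field_simp
    push_cast
    ring

end Operator

section SelfAdjoint

variable {𝕜 E : Type*} [RCLike 𝕜] [NormedAddCommGroup E] [InnerProductSpace 𝕜 E]
  [CompleteSpace E]

theorem opNorm_le_of_apply_eq_swap {A : E →L[𝕜] E} (hA : IsSelfAdjoint A) {c : ℝ} (hc : 0 ≤ c)
    {x y : E} (hx : ‖x‖ = 1) (hy : ‖y‖ = 1) (hxy : ⟪x, y⟫_𝕜 = 0)
    (hAx : A x = (c : 𝕜) • y) (hAy : A y = (c : 𝕜) • x)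
    (hcompl : ∀ z, ⟪x, z⟫_𝕜 = 0 → ⟪y, z⟫_𝕜 = 0 → ‖A z‖ ≤ c * ‖z‖) : ‖A‖ ≤ c := by
  have hsymm : ∀ a b, ⟪A a, b⟫_𝕜 = ⟪a, A b⟫_𝕜 := hA.isSymmetric
  have hyx : ⟪y, x⟫_𝕜 = 0 := inner_eq_zero_symm.mp hxy
  refine A.opNorm_le_bound hc fun v => ?_
  set z := v - ⟪x, v⟫_𝕜 • x - ⟪y, v⟫_𝕜 • y with hz
  have hxz : ⟪x, z⟫_𝕜 = 0 := by simp [hz, inner_sub_right, inner_smul_right, hx, hxy]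
  have hyz : ⟪y, z⟫_𝕜 = 0 := by simp [hz, inner_sub_right, inner_smul_right, hy, hyx]
  have hxAz : ⟪x, A z⟫_𝕜 = 0 := by simp [← hsymm, hAx, inner_smul_left, hyz]
  have hyAz : ⟪y, A z⟫_𝕜 = 0 := by simp [← hsymm, hAy, inner_smul_left, hxz]
  have hv : v = (⟪x, v⟫_𝕜 • x + ⟪y, v⟫_𝕜 • y) + z := by simp [hz]
  rw [hv]
  refine norm_apply_add_le_of_inner_eq_zero A hc ?_ ?_ ?_ (hcompl z hxz hyz)
  · simp [inner_add_left, inner_smul_left, hxz, hyz]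
  · simp [hAx, hAy, inner_add_left, inner_smul_left, hxAz, hyAz]
  refine norm_apply_add_le_of_inner_eq_zero A hc ?_ ?_ ?_ ?_
  · simp [inner_smul_left, inner_smul_right, hxy]
  · simp [hAx, hAy, inner_smul_left, inner_smul_right, hyx]
  · simp [hAx, norm_smul, hx, hy, abs_of_nonneg hc, mul_comm]
  · simp [hAy, norm_smul, hx, hy, abs_of_nonneg hc, mul_comm]

theorem HilbertBasis.apply_apply_eq_of_inner_apply_eq_zero {ι : Type*}
    (b : HilbertBasis ι 𝕜 E) {A : E →L[𝕜] E} (hA : IsSelfAdjoint A) (i₀ : ι)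
    (horth : ∀ i, i ≠ i₀ → ⟪A (b i₀), A (b i)⟫_𝕜 = 0) :
    A (A (b i₀)) = ((‖A (b i₀)‖ ^ 2 : ℝ) : 𝕜) • b i₀ := by
  have hsymm : ∀ x y, ⟪A x, y⟫_𝕜 = ⟪x, A y⟫_𝕜 := hA.isSymmetric
  refine b.ext_inner fun i => ?_
  rw [← hsymm, ← inner_conj_symm]
  rcases eq_or_ne i i₀ with rfl | hi
  · simp [inner_smul_right, b.orthonormal.1 i, inner_self_eq_norm_sq_to_K]
  · simp [horth i hi, inner_smul_right, b.orthonormal.2 hi]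

end SelfAdjoint

namespace RealDiag

variable {E : Type*} [NormedAddCommGroup E] [InnerProductSpace ℂ E] {e : HilbertBasis ℕ ℂ E}
  {D : E →L[ℂ] E}

theorem zero : RealDiag e 0 := fun _ => ⟨0, by simp⟩

theorem inner_apply (hD : RealDiag e D) {n : ℕ} {d : ℝ} (hd : D (e n) = (d : ℂ) • e n) (x : E) :
    ⟪e n, D x⟫_ℂ = d * ⟪e n, x⟫_ℂ := by
  have h : (innerSL ℂ (e n)).comp D = (d : ℂ) • innerSL ℂ (e n) := by
    refine e.ext_continuousLinearMap fun m => ?_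
    obtain ⟨dm, hdm⟩ := hD m
    rcases eq_or_ne n m with rfl | hnm
    · simp [hd]
    · simp [hdm, e.orthonormal.2 hnm]
  simpa using DFunLike.congr_fun h x

theorem eq_zero_of_apply_eq_zero (hD : RealDiag e D) {v : E} (hv : D v = 0)
    (hcoord : ∀ n, ⟪e n, v⟫_ℂ ≠ 0) : D = 0 := by
  refine e.ext_continuousLinearMap fun n => ?_
  obtain ⟨d, hd⟩ := hD n
  have h := hD.inner_apply hd v
  rw [hv, inner_zero_right, eq_comm, mul_eq_zero] at h
  simp [hd, h.resolve_right (hcoord n)]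

end RealDiag

theorem stmt_2_general (e : HilbertBasis ℕ ℂ H) (T T1 : H →L[ℂ] H)
    (hsa : IsSelfAdjoint T)
    (hdiag0 : ⟪e 0, T (e 0)⟫_ℂ = 0)
    (hne : ∀ n, n ≠ 0 → ⟪e 0, T (e n)⟫_ℂ ≠ 0)
    (horth : ∀ n, n ≠ 0 → ⟪T (e 0), T (e n)⟫_ℂ = 0)
    (hT1 : ∀ i j, ⟪e i, T1 (e j)⟫_ℂ = if i = 0 ∨ j = 0 then 0 else ⟪e i, T (e j)⟫_ℂ)
    (hnorm : ‖T1‖ ≤ ‖T (e 0)‖) :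
    (∀ D : H →L[ℂ] H, IsCompactOperator ⇑D → RealDiag e D → ‖T‖ ≤ ‖T + D‖) ∧
    (∀ D' : H →L[ℂ] H, RealDiag e D' →
      (∀ D : H →L[ℂ] H, RealDiag e D → ‖T + D'‖ ≤ ‖T + D‖) → D' = 0) := by
  have hsymm : ∀ x y, ⟪T x, y⟫_ℂ = ⟪x, T y⟫_ℂ := hsa.isSymmetric
  have hTe₀ : T (e 0) ≠ 0 := fun h => hne 1 one_ne_zero (by rw [← hsymm, h, inner_zero_left])
  obtain ⟨u, hu, he₀u, hTe₀u, hTu⟩ := exists_unit_swap_of_apply_apply_eq hTe₀ hdiag0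
    (e.apply_apply_eq_of_inner_apply_eq_zero hsa 0 horth)
  set c := ‖T (e 0)‖
  have he₀ : ‖e 0‖ = 1 := e.orthonormal.1 0
  have hue₀ : ⟪u, e 0⟫_ℂ = 0 := inner_eq_zero_symm.mp he₀u
  have hTle : ‖T‖ ≤ c := by
    refine opNorm_le_of_apply_eq_swap hsa (norm_nonneg _) he₀ hu he₀u hTe₀u hTu fun z hz huz => ?_
    rw [← e.apply_eq_of_inner_apply_eq_ite 0 hT1 hz (by simp [← hsymm, hTe₀u, huz])]
    exact T1.le_of_opNorm_le hnorm z
  have hentries : ∀ D, RealDiag e D → ⟪e 0, (T + D) u⟫_ℂ = c ∧ ⟪u, (T + D) (e 0)⟫_ℂ = c := by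
    intro D hD
    obtain ⟨d, hd⟩ := hD 0
    constructor
    · simp [hTu, hD.inner_apply hd, he₀u, he₀]
    · simp [hTe₀u, hd, hu, hue₀]
  refine ⟨fun D _ hD => hTle.trans (le_opNorm_of_inner_apply_eq he₀ hu (hentries D hD).1),
    fun D' hD' hmin => ?_⟩
  have hle : ‖T + D'‖ ≤ c := (by simpa using hmin 0 RealDiag.zero : ‖T + D'‖ ≤ ‖T‖).trans hTle
  have hD'u : D' u = 0 := by
    have h := apply_eq_of_inner_apply_eq_of_opNorm_le he₀ hu hle (hentries D' hD').1
    rwa [add_apply, hTu, add_eq_left] at h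
  have hD'e₀ : D' (e 0) = 0 := by
    have h := apply_eq_of_inner_apply_eq_of_opNorm_le hu he₀ hle (hentries D' hD').2
    rwa [add_apply, hTe₀u, add_eq_left] at h
  refine hD'.eq_zero_of_apply_eq_zero (v := e 0 + u) (by simp [hD'u, hD'e₀]) fun n => ?_
  rcases eq_or_ne n 0 with rfl | hn
  · simp [he₀u, he₀]
  rw [inner_add_right, e.orthonormal.2 hn, zero_add]
  intro h
  refine hne n hn ?_
  rw [← hsymm, ← inner_conj_symm, hTe₀u, inner_smul_right, h, mul_zero, map_zero]

/-- `T` is minimal with respect to compact real diagonal perturbations,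
and the zero diagonal is the unique bounded real diagonal minimizer. -/
theorem stmt_2 (e : HilbertBasis ℕ ℂ H) (T T1 : H →L[ℂ] H)
    (hcomp : IsCompactOperator ⇑T) (hsa : IsSelfAdjoint T)
    (hreal : ∀ i j, (⟪e i, T (e j)⟫_ℂ).im = 0)
    (hdiag0 : ⟪e 0, T (e 0)⟫_ℂ = 0)
    (hne : ∀ n, n ≠ 0 → ⟪e 0, T (e n)⟫_ℂ ≠ 0)
    (horth : ∀ n, n ≠ 0 → ⟪T (e 0), T (e n)⟫_ℂ = 0)
    (hT1 : ∀ i j, ⟪e i, T1 (e j)⟫_ℂ = if i = 0 ∨ j = 0 then 0 else ⟪e i, T (e j)⟫_ℂ)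
    (hnorm : ‖T1‖ ≤ ‖T (e 0)‖) :
    (∀ D : H →L[ℂ] H, IsCompactOperator ⇑D → RealDiag e D → ‖T‖ ≤ ‖T + D‖) ∧
    (∀ D' : H →L[ℂ] H, RealDiag e D' →
      (∀ D : H →L[ℂ] H, RealDiag e D → ‖T + D'‖ ≤ ‖T + D‖) → D' = 0) :=
  stmt_2_general e T T1 hsa hdiag0 hne horth hT1 hnorm
end
end

section
/- Let T be a self-adjoint bounded operator on a separable Hilbert space with a fixed orthonormal basis, and suppose T has real entries with T_{11}=0 and every column c_n(T) with n>1 orthogonal to c_1(T), where ‖c_1(T)‖ = ‖T‖. If D' is a bounded real diagonal operator with D'_{11} ≠ 0, then ‖T + D'‖ > ‖T‖. -/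
open scoped InnerProductSpace
open ContinuousLinearMap

noncomputable section

variable {H : Type*} [NormedAddCommGroup H] [InnerProductSpace ℂ H] [CompleteSpace H]

/-- any bounded real diagonal perturbation with nonzero first entry
strictly increases the norm. -/
theorem stmt_3 (e : HilbertBasis ℕ ℂ H) (T : H →L[ℂ] H)
    (hsa : IsSelfAdjoint T)
    (hreal : ∀ i j, (⟪e i, T (e j)⟫_ℂ).im = 0)
    (hdiag0 : ⟪e 0, T (e 0)⟫_ℂ = 0)
    (horth : ∀ n, n ≠ 0 → ⟪T (e 0), T (e n)⟫_ℂ = 0)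
    (hcol : ‖T (e 0)‖ = ‖T‖)
    (D' : H →L[ℂ] H) (hD' : RealDiag e D')
    (hD'0 : ⟪e 0, D' (e 0)⟫_ℂ ≠ 0) :
    ‖T‖ < ‖T + D'‖ := by
  obtain ⟨d, hd⟩ := hD' 0
  have he0 : ‖e 0‖ = 1 := e.orthonormal.1 0
  have hdne : d ≠ 0 := by
    intro h
    apply hD'0
    rw [hd, h]
    simp
  -- cross term vanishes
  have h0 : ⟪T (e 0), e 0⟫_ℂ = 0 := by
    rw [← inner_conj_symm, hdiag0, map_zero]
  have hcross : RCLike.re ⟪T (e 0), (d : ℂ) • e 0⟫_ℂ = 0 := by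
    rw [inner_smul_right, h0, mul_zero]
    simp
  have hval : ‖(T + D') (e 0)‖ ^ 2 = ‖T‖ ^ 2 + d ^ 2 := by
    have : (T + D') (e 0) = T (e 0) + (d : ℂ) • e 0 := by
      simp [hd]
    rw [this, @norm_add_sq ℂ _ _ _ _, hcross, hcol, norm_smul, he0]
    simp [Complex.norm_real, sq_abs]
    try ring
  have hle : ‖(T + D') (e 0)‖ ≤ ‖T + D'‖ := by
    calc ‖(T + D') (e 0)‖ ≤ ‖T + D'‖ * ‖e 0‖ := (T + D').le_opNorm _
    _ = ‖T + D'‖ := by rw [he0, mul_one]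
  have h1 : ‖T‖ ^ 2 < ‖(T + D') (e 0)‖ ^ 2 := by
    rw [hval]
    have hpos : 0 < d ^ 2 := by positivity
    linarith
  exact (lt_of_pow_lt_pow_left₀ 2 (norm_nonneg _) h1).trans_le hle
end
end

section
/- Let 0 < |γ| < 1 and let T be the operator on ℓ² with T_{ii}=0, T_{1j}=T_{j1}=γ^{j-1} for j≥2, T_{ij}=γ^{max(i,j)-2} for distinct i,j≥2. Define d_1 = 0 and, for n ≥ 2, d_n as the unique real number such that ⟨c_1(T), c_n(T) + d_n e_n⟩ = 0. Then d_n → 1/(γ-1) as n → ∞; in particular the diagonal operator D = Diag((d_n)) is bounded but not compact. -/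
open scoped InnerProductSpace
open ContinuousLinearMap

noncomputable section

variable {H : Type*} [NormedAddCommGroup H] [InnerProductSpace ℂ H] [CompleteSpace H]

/-- The matrix of the operator `T` (0-based indexing: index `n` is the paper's `n+1`):
zero diagonal, `T_{1j} = γ^{j-1}` on the first row/column, `T_{ij} = γ^{max(i,j)-2}`
for distinct `i,j ≥ 2`. -/
def Tmat (γ : ℝ) (i j : ℕ) : ℝ :=
  if i = j then 0 else if i = 0 then γ ^ j else if j = 0 then γ ^ i
  else γ ^ (max i j - 1)

/-- The diagonal sequence: `d 0 = 0` and for `n ≥ 1`, `d n` makes the `n`-th column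
of `T + D` orthogonal to the first column of `T`. -/
def dseq (γ : ℝ) (n : ℕ) : ℝ :=
  if n = 0 then 0 else -(∑' k, Tmat γ k 0 * Tmat γ k n) / Tmat γ 0 n

/-!
Index `0` is the paper's first index. The column `c₀(T)` is `(0, γ, γ², …)`, so for `n = m + 1`
the inner product `⟨c₀(T), cₙ(T)⟩` consists of the rows `k = 1, …, m`, each contributing
`γᵏ γᵐ`, and the geometric tail `∑_{k ≥ m+2} γᵏ γ^(k-1) = γ^(2m+3) / (1 - γ²)`. Dividing by
`T₀ₙ = γⁿ` gives `d (m + 1) = -(1 + γ + … + γ^(m-1)) - γ^(m+2) / (1 - γ²)`, which tends to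
`-1 / (1 - γ)`.
-/

open Finset Filter Topology

lemma tsum_mul_add_ite {α : Type*} [DecidableEq α] {a b : α → ℝ}
    (hab : Summable fun k => a k * b k) (n : α) (d : ℝ) :
    ∑' k, a k * (b k + if k = n then d else 0) = ∑' k, a k * b k + a n * d := by
  have hsingle : HasSum (fun k => a k * if k = n then d else 0) (a n * d) := by
    convert hasSum_ite_eq n (a n * d) using 2 with k
    split_ifs with hk <;> simp [hk]
  simp_rw [mul_add]
  exact (hab.hasSum.add hsingle).tsum_eq

section Tmat

variable {γ : ℝ}

lemma Tmat_symm (i j : ℕ) : Tmat γ i j = Tmat γ j i := by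
  unfold Tmat
  split_ifs <;> simp_all [max_comm]

lemma Tmat_self (i : ℕ) : Tmat γ i i = 0 := by
  simp [Tmat]

lemma Tmat_zero_left {n : ℕ} (hn : n ≠ 0) : Tmat γ 0 n = γ ^ n := by
  simp [Tmat, Ne.symm hn]

lemma Tmat_zero_right {k : ℕ} (hk : k ≠ 0) : Tmat γ k 0 = γ ^ k := by
  rw [Tmat_symm, Tmat_zero_left hk]

lemma Tmat_of_lt {i j : ℕ} (hi : i ≠ 0) (hij : i < j) : Tmat γ i j = γ ^ (j - 1) := by
  simp [Tmat, hij.ne, hi, (Nat.zero_lt_of_lt hij).ne', max_eq_right hij.le]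

lemma sum_range_Tmat_mul_Tmat (m : ℕ) :
    ∑ k ∈ range (m + 2), Tmat γ k 0 * Tmat γ k (m + 1) = γ ^ (m + 1) * ∑ k ∈ range m, γ ^ k := by
  rw [sum_range_succ, Tmat_self, mul_zero, add_zero, sum_range_succ', Tmat_self, zero_mul,
    add_zero, mul_sum]
  refine sum_congr rfl fun k hk => ?_
  rw [Tmat_zero_right k.add_one_ne_zero, Tmat_of_lt k.add_one_ne_zero (by simpa using hk),
    Nat.add_sub_cancel]
  ring

lemma Tmat_mul_Tmat_add (m k : ℕ) :
    Tmat γ (k + (m + 2)) 0 * Tmat γ (k + (m + 2)) (m + 1) = γ ^ (2 * m + 3) * (γ ^ 2) ^ k := by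
  rw [Tmat_zero_right (by omega), Tmat_symm, Tmat_of_lt m.succ_ne_zero (by omega), ← pow_add,
    ← pow_mul, ← pow_add]
  congr 1
  omega

lemma hasSum_Tmat_mul_Tmat (hγ : |γ| < 1) (m : ℕ) :
    HasSum (fun k => Tmat γ k 0 * Tmat γ k (m + 1))
      (γ ^ (2 * m + 3) * (1 - γ ^ 2)⁻¹ + γ ^ (m + 1) * ∑ k ∈ range m, γ ^ k) := by
  rw [← sum_range_Tmat_mul_Tmat, ← hasSum_nat_add_iff, funext (Tmat_mul_Tmat_add m)]
  have hγ2 : |γ ^ 2| < 1 := by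
    rw [abs_pow, sq_lt_one_iff₀ (abs_nonneg γ)]
    exact hγ
  exact (hasSum_geometric_of_abs_lt_one hγ2).mul_left _

lemma dseq_succ (hγ0 : γ ≠ 0) (hγ : |γ| < 1) (m : ℕ) :
    dseq γ (m + 1) = -(γ * γ ^ (m + 1) * (1 - γ ^ 2)⁻¹ + ∑ k ∈ range m, γ ^ k) := by
  rw [dseq, if_neg m.succ_ne_zero, Tmat_zero_left m.succ_ne_zero,
    (hasSum_Tmat_mul_Tmat hγ m).tsum_eq]
  field_simp
  ring

lemma tendsto_dseq (hγ0 : γ ≠ 0) (hγ : |γ| < 1) :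
    Tendsto (dseq γ) atTop (𝓝 (1 / (γ - 1))) := by
  rw [← tendsto_add_atTop_iff_nat 1, funext (dseq_succ hγ0 hγ)]
  have hpow : Tendsto (fun m => γ * γ ^ (m + 1) * (1 - γ ^ 2)⁻¹) atTop (𝓝 0) := by
    simpa using (((tendsto_pow_atTop_nhds_zero_of_abs_lt_one hγ).comp
      (tendsto_add_atTop_nat 1)).const_mul γ).mul_const (1 - γ ^ 2)⁻¹
  have hgeom := (hasSum_geometric_of_abs_lt_one hγ).tendsto_sum_nat
  convert (hpow.add hgeom).neg using 2
  rw [zero_add, one_div, ← neg_sub 1 γ, inv_neg]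

lemma orthogonal_iff_eq_dseq (hγ0 : γ ≠ 0) (hγ : |γ| < 1) {n : ℕ} (hn : n ≠ 0)
    (d : ℝ) :
    ∑' k, Tmat γ k 0 * (Tmat γ k n + if k = n then d else 0) = 0 ↔ d = dseq γ n := by
  obtain ⟨m, rfl⟩ := Nat.exists_eq_succ_of_ne_zero hn
  rw [tsum_mul_add_ite (hasSum_Tmat_mul_Tmat hγ m).summable, dseq, if_neg hn,
    Tmat_zero_left hn, Tmat_zero_right hn, eq_div_iff (pow_ne_zero _ hγ0)]
  constructor <;> intro h <;> linarith

end Tmat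

/-- the `d n` are the unique solutions of the orthogonality equations,
`d n → 1/(γ-1)`, and the diagonal operator `Diag (d n)` is bounded but not compact
(a diagonal operator is compact iff its diagonal is a null sequence). -/
theorem stmt_5 (γ : ℝ) (h0 : 0 < |γ|) (h1 : |γ| < 1) :
    (∀ n, n ≠ 0 →
      (∑' k, Tmat γ k 0 * (Tmat γ k n + if k = n then dseq γ n else 0)) = 0) ∧
    (∀ n, n ≠ 0 → ∀ d : ℝ,
      (∑' k, Tmat γ k 0 * (Tmat γ k n + if k = n then d else 0)) = 0 → d = dseq γ n) ∧
    Filter.Tendsto (dseq γ) Filter.atTop (nhds (1 / (γ - 1))) ∧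
    (∃ M : ℝ, ∀ n, |dseq γ n| ≤ M) ∧
    ¬ Filter.Tendsto (dseq γ) Filter.atTop (nhds 0) := by
  have hγ0 : γ ≠ 0 := abs_pos.mp h0
  have hlim := tendsto_dseq hγ0 h1
  obtain ⟨M, hM⟩ := hlim.abs.bddAbove_range
  refine ⟨fun n hn => (orthogonal_iff_eq_dseq hγ0 h1 hn _).2 rfl,
    fun n hn d => (orthogonal_iff_eq_dseq hγ0 h1 hn d).1, hlim, ⟨M, fun n => hM ⟨n, rfl⟩⟩,
    fun h => ?_⟩
  have hγ1 : γ - 1 ≠ 0 := sub_ne_zero.mpr (by rintro rfl; simp at h1)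
  exact one_div_ne_zero hγ1 (tendsto_nhds_unique hlim h)
end
end

section
/- Let H be a separable Hilbert space with fixed orthonormal basis and C a compact Hermitian operator. Then the distance from C to the bounded real diagonal operators equals its distance to the compact real diagonal operators: inf_{D ∈ D(B(H))^h} ‖C + D‖ = inf_{D ∈ D(K(H))^h} ‖C + D‖. -/
open scoped InnerProductSpace
open ContinuousLinearMap

noncomputable section

variable {H : Type*} [NormedAddCommGroup H] [InnerProductSpace ℂ H] [CompleteSpace H]

/-!
Let `P_N` be the orthogonal projection onto the span of the first `N` basis vectors. Since
`P_N → 1` strongly and the `P_N` are equicontinuous, the convergence is uniform on the compact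
closure of `C(ball)`, so `P_N C → C` in norm; taking adjoints `C P_N → C`, hence
`P_N C P_N → C`. For a bounded real diagonal `D`, the compression `P_N D P_N` is a
finite-rank real diagonal and `‖C + P_N D P_N‖ ≤ ‖P_N (C + D) P_N‖ + ‖C - P_N C P_N‖`, which
is at most `‖C + D‖ + ε` for large `N`.
-/

open Filter Topology Submodule

theorem Equicontinuous.tendstoUniformlyOn_of_tendsto {ι X α : Type*} [TopologicalSpace X]
    [UniformSpace α] {F : ι → X → α} {f : X → α} {l : Filter ι} (hF : Equicontinuous F)
    (hFf : ∀ x, Tendsto (fun i => F i x) l (𝓝 (f x))) {s : Set X} (hs : IsCompact s) :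
    TendstoUniformlyOn F f l s := by
  have : CompactSpace s := isCompact_iff_compactSpace.mp hs
  have hFs : Equicontinuous fun i (x : s) => F i x :=
    (equicontinuous_restrict_iff _).2 (hF.equicontinuousOn s)
  rw [tendstoUniformlyOn_iff_tendstoUniformly_comp_coe]
  exact UniformFun.tendsto_iff_tendstoUniformly.1 <|
    (hFs.tendsto_uniformFun_iff_pi _ _).2 (tendsto_pi_nhds.2 fun x => hFf x)

theorem ContinuousLinearMap.norm_comp_comp_le_of_norm_le_one {𝕜 E : Type*}
    [NontriviallyNormedField 𝕜]
    [NormedAddCommGroup E] [NormedSpace 𝕜 E] {P : E →L[𝕜] E} (hP : ‖P‖ ≤ 1) (A : E →L[𝕜] E) :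
    ‖P ∘L A ∘L P‖ ≤ ‖A‖ :=
  calc ‖P ∘L A ∘L P‖ ≤ ‖A ∘L P‖ :=
        (opNorm_comp_le _ _).trans (mul_le_of_le_one_left (norm_nonneg _) hP)
    _ ≤ ‖A‖ := (opNorm_comp_le _ _).trans (mul_le_of_le_one_right (norm_nonneg _) hP)

section CompactOperator

variable {𝕜 E ι : Type*} [RCLike 𝕜] {l : Filter ι}

theorem IsCompactOperator.tendsto_comp_of_tendsto_apply {F : Type*}
    [NormedAddCommGroup E] [NormedSpace 𝕜 E] [NormedAddCommGroup F] [NormedSpace 𝕜 F]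
    {P : ι → F →L[𝕜] F} {M : ℝ} (hP : ∀ i, ‖P i‖ ≤ M)
    (hPy : ∀ y, Tendsto (fun i => P i y) l (𝓝 y)) {T : E →L[𝕜] F} (hT : IsCompactOperator T) :
    Tendsto (fun i => P i ∘L T) l (𝓝 T) := by
  have hunif : TendstoUniformlyOn (fun i => ⇑(P i)) id l (closure (T '' Metric.closedBall 0 1)) :=
    (LipschitzWith.uniformEquicontinuous _ M.toNNReal fun i =>
      (P i).lipschitzWith_of_opNorm_le ((hP i).trans M.le_coe_toNNReal))
      |>.equicontinuous.tendstoUniformlyOn_of_tendsto hPy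
      (hT.isCompact_closure_image_closedBall 1)
  refine Metric.tendsto_nhds.2 fun ε hε => ?_
  filter_upwards [Metric.tendstoUniformlyOn_iff.1 hunif (ε / 2) (half_pos hε)] with i hi
  rw [dist_eq_norm]
  refine lt_of_le_of_lt (opNorm_le_of_unit_norm (half_pos hε).le fun x hx => ?_)
    (half_lt_self hε)
  have hTx : T x ∈ closure (T '' Metric.closedBall 0 1) :=
    subset_closure ⟨x, by simp [hx], rfl⟩
  simpa [dist_eq_norm'] using (hi _ hTx).le

variable [NormedAddCommGroup E] [InnerProductSpace 𝕜 E] [CompleteSpace E]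

theorem IsCompactOperator.tendsto_comp_comp_of_isSelfAdjoint {P : ι → E →L[𝕜] E} {M : ℝ}
    (hP : ∀ i, ‖P i‖ ≤ M) (hPsa : ∀ i, IsSelfAdjoint (P i))
    (hPy : ∀ y, Tendsto (fun i => P i y) l (𝓝 y)) {C : E →L[𝕜] E} (hC : IsCompactOperator C)
    (hCsa : IsSelfAdjoint C) :
    Tendsto (fun i => P i ∘L C ∘L P i) l (𝓝 C) := by
  have hPC : Tendsto (fun i => P i ∘L C) l (𝓝 C) := hC.tendsto_comp_of_tendsto_apply hP hPy
  have hCP : Tendsto (fun i => C ∘L P i) l (𝓝 C) := by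
    have hadj : ∀ i, adjoint (P i ∘L C) = C ∘L P i := fun i => by
      rw [adjoint_comp, hCsa.adjoint_eq, (hPsa i).adjoint_eq]
    have := (adjoint.continuous.tendsto C).comp hPC
    simpa only [Function.comp_def, hadj, hCsa.adjoint_eq] using this
  have hsplit : ∀ i, P i ∘L C ∘L P i - C = P i ∘L (C ∘L P i - C) + (P i ∘L C - C) := fun i => by
    rw [comp_sub]
    abel
  rw [tendsto_iff_norm_sub_tendsto_zero] at hPC hCP ⊢
  refine squeeze_zero (g := fun i => M * ‖C ∘L P i - C‖ + ‖P i ∘L C - C‖)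
    (fun _ => norm_nonneg _) (fun i => ?_) (by simpa using (hCP.const_mul M).add hPC)
  rw [hsplit]
  have h1 : ‖P i ∘L (C ∘L P i - C)‖ ≤ M * ‖C ∘L P i - C‖ :=
    (opNorm_comp_le _ _).trans (mul_le_mul_of_nonneg_right (hP i) (norm_nonneg _))
  exact norm_add_le_of_le h1 le_rfl

end CompactOperator

namespace HilbertBasis

variable {𝕜 E : Type*} [RCLike 𝕜] [NormedAddCommGroup E] [InnerProductSpace 𝕜 E]
  (e : HilbertBasis ℕ 𝕜 E)

def spanIio (N : ℕ) : Submodule 𝕜 E := span 𝕜 (e '' Set.Iio N)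

instance (N : ℕ) : FiniteDimensional 𝕜 (e.spanIio N) :=
  FiniteDimensional.span_of_finite 𝕜 ((Set.finite_Iio N).image _)

theorem monotone_spanIio : Monotone e.spanIio := fun _ _ h =>
  span_mono (Set.image_mono (Set.Iio_subset_Iio h))

theorem tendsto_starProjection_spanIio (x : E) :
    Tendsto (fun N => (e.spanIio N).starProjection x) atTop (𝓝 x) := by
  refine starProjection_tendsto_self _ e.monotone_spanIio x ?_
  rw [← e.dense_span]
  refine topologicalClosure_mono (span_le.2 ?_)
  rintro _ ⟨n, rfl⟩
  exact mem_iSup_of_mem (n + 1) (subset_span ⟨n, Nat.lt_succ_self n, rfl⟩)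

theorem starProjection_spanIio_of_lt {N n : ℕ} (h : n < N) :
    (e.spanIio N).starProjection (e n) = e n :=
  starProjection_eq_self_iff.2 (subset_span ⟨n, h, rfl⟩)

theorem starProjection_spanIio_of_le {N n : ℕ} (h : N ≤ n) :
    (e.spanIio N).starProjection (e n) = 0 := by
  refine (starProjection_apply_eq_zero_iff _).2 (isOrtho_iff_le.1 ?_ (mem_span_singleton_self _))
  refine isOrtho_span.2 ?_
  rintro _ rfl _ ⟨i, hi, rfl⟩
  exact e.orthonormal.2 (by simp at hi; omega)

theorem isCompactOperator_starProjection_spanIio (N : ℕ) :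
    IsCompactOperator (e.spanIio N).starProjection :=
  (isCompactOperator_of_locallyCompactSpace_dom
    (e.spanIio N).orthogonalProjectionOnto).clm_comp (e.spanIio N).subtypeL

end HilbertBasis

section Diagonal

variable {E : Type*} [NormedAddCommGroup E] [InnerProductSpace ℂ E] {e : HilbertBasis ℕ ℂ E}

theorem RealDiag.starProjection_comp_comp {D : E →L[ℂ] E} (hD : RealDiag e D) (N : ℕ) :
    RealDiag e ((e.spanIio N).starProjection ∘L D ∘L (e.spanIio N).starProjection) := by
  intro n
  rcases lt_or_ge n N with hn | hn
  · obtain ⟨d, hd⟩ := hD n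
    refine ⟨d, ?_⟩
    simp [e.starProjection_spanIio_of_lt hn, hd]
  · exact ⟨0, by simp [e.starProjection_spanIio_of_le hn]⟩

theorem diagDistK_le (C : E →L[ℂ] E) {D : E →L[ℂ] E} (hD : IsCompactOperator D)
    (hDd : RealDiag e D) : diagDistK e C ≤ ‖C + D‖ := by
  unfold diagDistK
  exact ciInf_le ⟨0, Set.forall_mem_range.2 fun _ => norm_nonneg _⟩
    (⟨D, hD, hDd⟩ : {D : E →L[ℂ] E // IsCompactOperator ⇑D ∧ RealDiag e D})

end Diagonal

/-- the distance from a compact Hermitian operator to the bounded real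
diagonals equals its distance to the compact real diagonals. -/
theorem stmt_10 (e : HilbertBasis ℕ ℂ H) (C : H →L[ℂ] H)
    (hcomp : IsCompactOperator ⇑C) (hsa : IsSelfAdjoint C) :
    (⨅ D : {D : H →L[ℂ] H // RealDiag e D}, ‖C + (D : H →L[ℂ] H)‖) = diagDistK e C := by
  have hzero : RealDiag e 0 := fun n => ⟨0, by simp⟩
  have : Nonempty {D : H →L[ℂ] H // RealDiag e D} := ⟨⟨0, hzero⟩⟩
  have : Nonempty {D : H →L[ℂ] H // IsCompactOperator ⇑D ∧ RealDiag e D} :=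
    ⟨⟨0, isCompactOperator_zero, hzero⟩⟩
  refine le_antisymm (ciInf_mono_of_forall_exists
    ⟨0, Set.forall_mem_range.2 fun _ => norm_nonneg _⟩ fun D => ⟨⟨D.1, D.2.2⟩, le_rfl⟩) ?_
  refine le_ciInf fun ⟨D, hD⟩ => le_of_forall_pos_le_add fun ε hε => ?_
  have hcompress := hcomp.tendsto_comp_comp_of_isSelfAdjoint (fun _ => starProjection_norm_le _)
    (fun _ => isSelfAdjoint_starProjection _) e.tendsto_starProjection_spanIio hsa
  obtain ⟨N, hN⟩ := Metric.tendsto_atTop.1 hcompress ε hε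
  set P := (e.spanIio N).starProjection
  calc diagDistK e C ≤ ‖C + P ∘L D ∘L P‖ :=
        diagDistK_le C ((e.isCompactOperator_starProjection_spanIio N).comp_clm _)
          (hD.starProjection_comp_comp N)
    _ = ‖P ∘L (C + D) ∘L P + (C - P ∘L C ∘L P)‖ := by
        rw [add_comp, comp_add]
        abel_nf
    _ ≤ ‖C + D‖ + ε :=
        norm_add_le_of_le (norm_comp_comp_le_of_norm_le_one (starProjection_norm_le _) _)
          (by rw [← dist_eq_norm']; exact (hN N le_rfl).le)
end
end

section
/- Let A = C + D₁ be a compact Hermitian operator with ‖A‖ = 1 on a separable Hilbert space, and suppose there exists a nonzero Hermitian trace-class X with zero diagonal entries such that tr(XA) = ‖X‖₁. Then X commutes with A; moreover, writing E₊, E₋ for the spectral projections of A onto the eigenvalues 1 and -1, one has E₊X⁺ = X⁺ and E₋X⁻ = X⁻, where X = X⁺ - X⁻ is the Jordan decomposition of X. -/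
/-!
Write `X = X⁺ - X⁻` and `|X| = X⁺ + X⁻` with `X⁺, X⁻ ≥ 0`, and let `R = √X⁺`. By cyclicity of the
trace, `tr (X⁺ A) = ∑ ⟪R eₙ, A R eₙ⟫`, and as `‖A‖ ≤ 1` the real part of each term is at most
`‖R eₙ‖² = ⟪eₙ, X⁺ eₙ⟫`; likewise `re tr (X⁻ (-A)) ≤ tr X⁻`. Adding up, `re tr (X A) ≤ ‖X‖₁`, so
equality forces `A R eₙ = R eₙ` for all `n`, i.e. `A X⁺ = X⁺`, and similarly `A X⁻ = -X⁻`.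
Taking adjoints, `X⁺` and `X⁻` commute with `A`, and their ranges lie in `ker (A ∓ 1)`.
-/

open scoped InnerProductSpace
open ContinuousLinearMap

noncomputable section

variable {H : Type*} [NormedAddCommGroup H] [InnerProductSpace ℂ H] [CompleteSpace H]

section InnerProductSpace

variable {𝕜 E ι κ : Type*} [RCLike 𝕜] [NormedAddCommGroup E] [InnerProductSpace 𝕜 E]

open RCLike

lemma norm_apply_sub_self_sq_le {A : E →L[𝕜] E} (hA : ‖A‖ ≤ 1) (v : E) :
    ‖A v - v‖ ^ 2 ≤ 2 * (‖v‖ ^ 2 - re ⟪v, A v⟫_𝕜) := by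
  have hAv : ‖A v‖ ≤ ‖v‖ := (A.le_opNorm v).trans (mul_le_of_le_one_left (norm_nonneg v) hA)
  rw [norm_sub_sq (𝕜 := 𝕜), inner_re_symm]
  nlinarith [norm_nonneg (A v)]

lemma re_inner_apply_le_norm_sq {A : E →L[𝕜] E} (hA : ‖A‖ ≤ 1) (v : E) :
    re ⟪v, A v⟫_𝕜 ≤ ‖v‖ ^ 2 := by
  nlinarith [norm_apply_sub_self_sq_le hA v, sq_nonneg ‖A v - v‖]

lemma re_inner_apply_lt_norm_sq {A : E →L[𝕜] E} (hA : ‖A‖ ≤ 1) {v : E} (hv : A v ≠ v) :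
    re ⟪v, A v⟫_𝕜 < ‖v‖ ^ 2 := by
  have hpos : 0 < ‖A v - v‖ := norm_pos_iff.2 (sub_ne_zero.2 hv)
  nlinarith [norm_apply_sub_self_sq_le hA v]

namespace HilbertBasis

theorem hasSum_norm_inner_sq (b : HilbertBasis ι 𝕜 E) (x : E) :
    HasSum (fun i => ‖⟪b i, x⟫_𝕜‖ ^ 2) (‖x‖ ^ 2) := by
  have h := RCLike.hasSum_re 𝕜 (b.hasSum_inner_mul_inner x x)
  rw [inner_self_eq_norm_sq] at h
  convert h using 2 with i
  rw [inner_mul_symm_re_eq_norm, norm_mul, norm_inner_symm, sq]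

theorem summable_inner_mul_inner_prod (b : HilbertBasis ι 𝕜 E) {x y : κ → E}
    (hx : Summable fun k => ‖x k‖ ^ 2) (hy : Summable fun k => ‖y k‖ ^ 2) :
    Summable fun p : κ × ι => ⟪x p.1, b p.2⟫_𝕜 * ⟪b p.2, y p.1⟫_𝕜 := by
  set bound : κ × ι → ℝ := fun p => (‖⟪b p.2, x p.1⟫_𝕜‖ ^ 2 + ‖⟪b p.2, y p.1⟫_𝕜‖ ^ 2) / 2
  have hle : ∀ p : κ × ι, ‖⟪x p.1, b p.2⟫_𝕜 * ⟪b p.2, y p.1⟫_𝕜‖ ≤ bound p := fun p => by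
    dsimp only [bound]
    rw [norm_mul, norm_inner_symm]
    nlinarith [sq_nonneg (‖⟪b p.2, x p.1⟫_𝕜‖ - ‖⟪b p.2, y p.1⟫_𝕜‖)]
  have hfiber : ∀ k, HasSum (fun i => bound (k, i)) ((‖x k‖ ^ 2 + ‖y k‖ ^ 2) / 2) := fun k =>
    ((b.hasSum_norm_inner_sq (x k)).add (b.hasSum_norm_inner_sq (y k))).div_const 2
  have hbound : Summable bound := by
    refine (summable_prod_of_nonneg fun p => by positivity).2
      ⟨fun k => (hfiber k).summable, ?_⟩
    simpa only [(hfiber _).tsum_eq] using (hx.add hy).div_const 2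
  exact Summable.of_norm_bounded hbound hle

theorem exists_hasSum_inner_mul_self_mul [CompleteSpace E] (b : HilbertBasis ι 𝕜 E)
    {R : E →L[𝕜] E} (hR : IsSelfAdjoint R) (hRb : Summable fun i => ‖R (b i)‖ ^ 2)
    (A : E →L[𝕜] E) :
    ∃ s, HasSum (fun i => ⟪b i, (R * R * A) (b i)⟫_𝕜) s ∧
      HasSum (fun i => ⟪R (b i), A (R (b i))⟫_𝕜) s := by
  have hAR : Summable fun i => ‖adjoint A (R (b i))‖ ^ 2 := by
    refine (hRb.mul_left (‖A‖ ^ 2)).of_nonneg_of_le (fun i => by positivity) fun i => ?_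
    rw [← mul_pow, ← adjoint.norm_map A]
    gcongr
    exact le_opNorm _ _
  -- both sums are iterated sums of the absolutely summable family `⟪A† R bᵢ, bⱼ⟫ ⟪bⱼ, R bᵢ⟫`
  have hc := (b.summable_inner_mul_inner_prod hAR hRb).hasSum
  refine ⟨_, ?_, hc.prod_fiberwise fun i => ?_⟩
  · refine ((Equiv.prodComm ι ι).hasSum_iff.2 hc).prod_fiberwise fun j => ?_
    convert b.hasSum_inner_mul_inner (R (b j)) (R (A (b j))) using 1
    · ext i
      simp only [Function.comp_apply, Equiv.prodComm_apply, Prod.fst_swap, Prod.snd_swap]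
      rw [adjoint_inner_left, ← hR.adjoint_eq, adjoint_inner_left, adjoint_inner_right,
        hR.adjoint_eq, mul_comm]
    · rw [← hR.adjoint_eq, adjoint_inner_left, hR.adjoint_eq]; rfl
  · simpa only [adjoint_inner_left] using b.hasSum_inner_mul_inner (adjoint A (R (b i))) (R (b i))

end HilbertBasis

end InnerProductSpace

section PositiveOperator

variable {e : HilbertBasis ℕ ℂ H} {P : H →L[ℂ] H}

lemma re_inner_apply_eq_norm_sqrt_sq (hP : 0 ≤ P) (x : H) :
    (⟪x, P x⟫_ℂ).re = ‖CFC.sqrt P x‖ ^ 2 := by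
  conv_lhs => rw [← CFC.sqrt_mul_sqrt_self P hP, mul_apply_eq_comp, ← adjoint_inner_left,
    (CFC.sqrt_nonneg P).isSelfAdjoint.adjoint_eq]
  exact inner_self_eq_norm_sq (𝕜 := ℂ) _

lemma re_inner_apply_nonneg (hP : 0 ≤ P) (x : H) : 0 ≤ (⟪x, P x⟫_ℂ).re :=
  re_inner_apply_eq_norm_sqrt_sq hP x ▸ sq_nonneg _

lemma hasSum_opTrace_mul (hP : 0 ≤ P) (hPtc : Summable fun n => (⟪e n, P (e n)⟫_ℂ).re)
    (A : H →L[ℂ] H) :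
    HasSum (fun n => ⟪e n, (P * A) (e n)⟫_ℂ) (opTrace e (P * A)) ∧
      HasSum (fun n => (⟪CFC.sqrt P (e n), A (CFC.sqrt P (e n))⟫_ℂ).re)
        (opTrace e (P * A)).re := by
  have hsqrt := (CFC.sqrt_nonneg P).isSelfAdjoint
  obtain ⟨s, htr, hs⟩ := e.exists_hasSum_inner_mul_self_mul hsqrt
    (hPtc.congr (re_inner_apply_eq_norm_sqrt_sq hP <| e ·)) A
  rw [CFC.sqrt_mul_sqrt_self P hP] at htr
  rw [opTrace, htr.tsum_eq]
  exact ⟨htr, Complex.hasSum_re hs⟩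

variable {A : H →L[ℂ] H}

lemma re_inner_sqrt_apply_le (hP : 0 ≤ P) (hA : ‖A‖ ≤ 1) (x : H) :
    (⟪CFC.sqrt P x, A (CFC.sqrt P x)⟫_ℂ).re ≤ (⟪x, P x⟫_ℂ).re := by
  rw [re_inner_apply_eq_norm_sqrt_sq hP]
  exact re_inner_apply_le_norm_sq hA _

lemma re_opTrace_mul_le (hP : 0 ≤ P) (hPtc : Summable fun n => (⟪e n, P (e n)⟫_ℂ).re)
    (hA : ‖A‖ ≤ 1) : (opTrace e (P * A)).re ≤ ∑' n, (⟪e n, P (e n)⟫_ℂ).re :=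
  hasSum_le (fun n => re_inner_sqrt_apply_le hP hA (e n)) (hasSum_opTrace_mul hP hPtc A).2
    hPtc.hasSum

lemma mul_eq_self_of_re_opTrace_mul_eq (hP : 0 ≤ P)
    (hPtc : Summable fun n => (⟪e n, P (e n)⟫_ℂ).re) (hA : ‖A‖ ≤ 1)
    (h : (opTrace e (P * A)).re = ∑' n, (⟪e n, P (e n)⟫_ℂ).re) : A * P = P := by
  have hfix : ∀ n, A (CFC.sqrt P (e n)) = CFC.sqrt P (e n) := by
    intro n
    by_contra hn
    refine h.not_lt (hasSum_lt (i := n) (fun m => re_inner_sqrt_apply_le hP hA (e m)) ?_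
      (hasSum_opTrace_mul hP hPtc A).2 hPtc.hasSum)
    rw [re_inner_apply_eq_norm_sqrt_sq hP]
    exact re_inner_apply_lt_norm_sq hA hn
  have hAsqrt : A * CFC.sqrt P = CFC.sqrt P :=
    ext_on (Submodule.dense_iff_topologicalClosure_eq_top.2 e.dense_span) <| by
      rintro _ ⟨n, rfl⟩
      exact hfix n
  rw [← CFC.sqrt_mul_sqrt_self P hP, ← mul_assoc, hAsqrt]

lemma summable_re_inner_of_le {Q : H →L[ℂ] H} (hP : 0 ≤ P) (hPQ : P ≤ Q)
    (hQ : Summable fun n => (⟪e n, Q (e n)⟫_ℂ).re) :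
    Summable fun n => (⟪e n, P (e n)⟫_ℂ).re :=
  hQ.of_nonneg_of_le (fun n => re_inner_apply_nonneg hP _) fun n => by
    have := re_inner_apply_nonneg (sub_nonneg.2 hPQ) (e n)
    rwa [sub_apply, inner_sub_right, Complex.sub_re, sub_nonneg] at this

lemma mul_eq_self_of_re_opTrace_sub_mul_eq {N : H →L[ℂ] H} (hP : 0 ≤ P) (hN : 0 ≤ N)
    (hPN : Summable fun n => (⟪e n, (P + N) (e n)⟫_ℂ).re) (hA : ‖A‖ ≤ 1)
    (h : (opTrace e ((P - N) * A)).re = ∑' n, (⟪e n, (P + N) (e n)⟫_ℂ).re) :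
    A * P = P ∧ -A * N = N := by
  have hPtc := summable_re_inner_of_le hP (le_add_of_nonneg_right hN) hPN
  have hNtc := summable_re_inner_of_le hN (le_add_of_nonneg_left hP) hPN
  have hnegA : ‖-A‖ ≤ 1 := by rwa [norm_neg]
  have hsplit : (opTrace e (P * A)).re + (opTrace e (N * -A)).re =
      (∑' n, (⟪e n, P (e n)⟫_ℂ).re) + ∑' n, (⟪e n, N (e n)⟫_ℂ).re := by
    have htr := (hasSum_opTrace_mul hP hPtc A).1.add (hasSum_opTrace_mul hN hNtc (-A)).1
    simp only [← inner_add_right, ← add_apply] at htr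
    rw [show (P - N) * A = P * A + N * -A by noncomm_ring] at h
    rw [← Complex.add_re, ← htr.tsum_eq, ← opTrace, h, ← hPtc.tsum_add hNtc]
    simp only [add_apply, inner_add_right, Complex.add_re]
  have hleP := re_opTrace_mul_le hP hPtc hA
  have hleN := re_opTrace_mul_le hN hNtc hnegA
  exact ⟨mul_eq_self_of_re_opTrace_mul_eq hP hPtc hA (by linarith),
    mul_eq_self_of_re_opTrace_mul_eq hN hNtc hnegA (by linarith)⟩

end PositiveOperator

lemma IsSelfAdjoint.commute_of_mul_eq_self {R : Type*} [Mul R] [StarMul R] {a p : R}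
    (ha : IsSelfAdjoint a) (hp : IsSelfAdjoint p) (h : a * p = p) : Commute a p := by
  have h' : p * a = p := by simpa [star_mul, ha.star_eq, hp.star_eq] using congrArg star h
  exact h.trans h'.symm

lemma opAbs_eq_posPart_add_negPart {X : H →L[ℂ] H} (hX : IsSelfAdjoint X) :
    opAbs X = X⁺ + X⁻ :=
  (CFC.posPart_add_negPart X hX).symm

lemma opPosPart_eq_posPart {X : H →L[ℂ] H} (hX : IsSelfAdjoint X) : opPosPart X = X⁺ := by
  rw [opPosPart, opAbs, ← star_eq_adjoint, ← CFC.abs, CFC.abs_add_self X hX, two_smul,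
    ← two_smul ℂ, inv_smul_smul₀ two_ne_zero]

lemma opNegPart_eq_negPart {X : H →L[ℂ] H} (hX : IsSelfAdjoint X) : opNegPart X = X⁻ := by
  rw [opNegPart, opAbs, ← star_eq_adjoint, ← CFC.abs, CFC.abs_sub_self X hX, two_smul,
    ← two_smul ℂ, inv_smul_smul₀ two_ne_zero]

theorem stmt_12_general (e : HilbertBasis ℕ ℂ H) (A : H →L[ℂ] H)
    (hsa : IsSelfAdjoint A) (hA : ‖A‖ = 1)
    (X : H →L[ℂ] H) (hXsa : IsSelfAdjoint X) (hXtc : IsTraceClass e X)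
    (htr : opTrace e (X * A) = ((traceNorm e X : ℝ) : ℂ))
    (Ep Em : H →L[ℂ] H)
    (hEp : ∀ x : H, Ep x = x ↔ A x = x)
    (hEm : ∀ x : H, Em x = x ↔ A x = -x) :
    A * X = X * A ∧ Ep * opPosPart X = opPosPart X ∧ Em * opNegPart X = opNegPart X := by
  rw [opPosPart_eq_posPart hXsa, opNegPart_eq_negPart hXsa]
  have hP := CFC.posPart_nonneg X
  have hN := CFC.negPart_nonneg X
  have hX := CFC.posPart_sub_negPart X hXsa
  have hAbs := opAbs_eq_posPart_add_negPart hXsa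
  obtain ⟨hAP, hAN⟩ := mul_eq_self_of_re_opTrace_sub_mul_eq hP hN
    (by rwa [IsTraceClass, hAbs] at hXtc) hA.le
    (by rw [hX, htr, Complex.ofReal_re, traceNorm, hAbs])
  have hcomm := (hsa.commute_of_mul_eq_self hP.isSelfAdjoint hAP).sub_right
    (Commute.neg_left_iff.1 (hsa.neg.commute_of_mul_eq_self hN.isSelfAdjoint hAN))
  refine ⟨hX ▸ hcomm.eq, ?_, ?_⟩
  · ext x
    exact (hEp _).2 congr($hAP x)
  · ext x
    exact (hEm _).2 (neg_eq_iff_eq_neg.1 congr($hAN x))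

/-- if `‖A‖ = 1` and a nonzero Hermitian trace-class `X` with zero
diagonal satisfies `tr(XA) = ‖X‖₁`, then `X` commutes with `A`, `E₊X⁺ = X⁺` and
`E₋X⁻ = X⁻`, where `E±` are the orthogonal projections onto `ker(A ∓ I)`. -/
theorem stmt_12 (e : HilbertBasis ℕ ℂ H) (A : H →L[ℂ] H)
    (hcomp : IsCompactOperator ⇑A) (hsa : IsSelfAdjoint A) (hA : ‖A‖ = 1)
    (X : H →L[ℂ] H) (hX : X ≠ 0) (hXsa : IsSelfAdjoint X) (hXtc : IsTraceClass e X)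
    (hXdiag : ∀ n, ⟪e n, X (e n)⟫_ℂ = 0)
    (htr : opTrace e (X * A) = ((traceNorm e X : ℝ) : ℂ))
    (Ep Em : H →L[ℂ] H)
    (hEpsa : IsSelfAdjoint Ep) (hEpidem : Ep * Ep = Ep)
    (hEp : ∀ x : H, Ep x = x ↔ A x = x)
    (hEmsa : IsSelfAdjoint Em) (hEmidem : Em * Em = Em)
    (hEm : ∀ x : H, Em x = x ↔ A x = -x) :
    A * X = X * A ∧ Ep * opPosPart X = opPosPart X ∧ Em * opNegPart X = opNegPart X :=
  stmt_12_general e A hsa hA X hXsa hXtc htr Ep Em hEp hEm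
end
end

section
/- Let C be a compact Hermitian operator and D₁ a compact real diagonal operator on a separable Hilbert space such that C + D₁ is minimal (‖C+D₁‖ ≤ ‖C+D‖ for all compact real diagonal D) and C+D₁ ≠ 0. Then λ_min(C+D₁) + λ_max(C+D₁) = 0. -/
/-! Write `B = C + D₁`, whose spectrum lies in `[s, S]` with `s, S` in it. If `s + S > 0`, put
`t = (s + S) / 2` and let `P` be the orthogonal projection onto the span of finitely many basis
vectors, so that `t • P` is a compact real diagonal operator. From
`B - t P = P (B - t) P + P B (1 - P) + (1 - P) B` we get
`‖B - t P‖ ≤ (S - s) / 2 + 2 ‖(1 - P) B‖`, and since `B` is compact, `‖(1 - P) B‖` can be made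
smaller than `t / 4`; then `‖B - t P‖ < S ≤ ‖B‖`, contradicting minimality. Applied to `-B`,
which is minimal as well, the same argument gives `s + S ≥ 0`. -/

open scoped InnerProductSpace
open ContinuousLinearMap

noncomputable section

variable {H : Type*} [NormedAddCommGroup H] [InnerProductSpace ℂ H] [CompleteSpace H]

open Filter Topology Metric Submodule
open scoped NNReal

namespace IsSelfAdjoint

variable {A : Type*} [CStarAlgebra A] {a p : A} {t r : ℝ}

lemma norm_sub_algebraMap_le [Nontrivial A] (ha : IsSelfAdjoint a)
    (h : spectrum ℝ a ⊆ closedBall t r) : ‖a - algebraMap ℝ A t‖ ≤ r := by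
  have ha' : IsSelfAdjoint (a - algebraMap ℝ A t) := ha.sub (.algebraMap A (.all t))
  have key : ∀ x ∈ spectrum ℝ (a - algebraMap ℝ A t), |x| ≤ r := by
    rw [← spectrum.sub_singleton_eq]
    rintro _ ⟨y, hy, _, rfl, rfl⟩
    simpa [Real.dist_eq] using h hy
  rcases CStarAlgebra.norm_or_neg_norm_mem_spectrum ha' with h' | h'
  · simpa using key _ h'
  · simpa using key _ h'

lemma norm_sub_smul_starProjection_le [Nontrivial A] (ha : IsSelfAdjoint a)
    (hp : IsStarProjection p) (h : spectrum ℝ a ⊆ closedBall t r) :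
    ‖a - t • p‖ ≤ r + 2 * ‖(1 - p) * a‖ := by
  have hp1 : ‖p‖ ≤ 1 := hp.norm_le
  have hdecomp :
      a - t • p = p * (a - algebraMap ℝ A t) * p + p * (a * (1 - p)) + (1 - p) * a := by
    simp only [Algebra.algebraMap_eq_smul_one, mul_sub, sub_mul, mul_smul_comm, smul_mul_assoc,
      mul_one, one_mul, mul_assoc, hp.isIdempotentElem.eq]
    abel
  have h₁ : ‖p * (a - algebraMap ℝ A t) * p‖ ≤ r :=
    calc _ ≤ ‖p‖ * ‖a - algebraMap ℝ A t‖ * ‖p‖ := norm_mul₃_le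
      _ ≤ 1 * ‖a - algebraMap ℝ A t‖ * 1 := by gcongr
      _ ≤ r := by simpa using ha.norm_sub_algebraMap_le h
  have h₂ : ‖p * (a * (1 - p))‖ ≤ ‖(1 - p) * a‖ :=
    calc _ ≤ ‖p‖ * ‖a * (1 - p)‖ := norm_mul_le _ _
      _ ≤ 1 * ‖star ((1 - p) * a)‖ := by
        rw [star_mul, ha.star_eq, hp.one_sub.isSelfAdjoint.star_eq]; gcongr
      _ = _ := by rw [one_mul, norm_star]
  calc ‖a - t • p‖
      ≤ ‖p * (a - algebraMap ℝ A t) * p‖ + ‖p * (a * (1 - p))‖ + ‖(1 - p) * a‖ := by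
        rw [hdecomp]; exact norm_add₃_le
    _ ≤ r + 2 * ‖(1 - p) * a‖ := by linarith

lemma norm_sub_smul_starProjection_lt (ha : IsSelfAdjoint a) (hp : IsStarProjection p)
    (hsmall : 4 * ‖(1 - p) * a‖ < sInf (spectrum ℝ a) + sSup (spectrum ℝ a)) :
    ‖a - ((sInf (spectrum ℝ a) + sSup (spectrum ℝ a)) / 2) • p‖ < ‖a‖ := by
  set s := sInf (spectrum ℝ a)
  set S := sSup (spectrum ℝ a)
  have hne : (spectrum ℝ a).Nonempty := by
    by_contra! h
    simp only [s, S, h, Real.sInf_empty, Real.sSup_empty] at hsmall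
    linarith [norm_nonneg ((1 - p) * a)]
  have : Nontrivial A := by
    rcases subsingleton_or_nontrivial A with _ | _
    · simp [spectrum.of_subsingleton] at hne
    · assumption
  have hcpt : IsCompact (spectrum ℝ a) := spectrum.isCompact a
  have hball : spectrum ℝ a ⊆ closedBall ((s + S) / 2) ((S - s) / 2) := by
    rw [Real.closedBall_eq_Icc]
    intro x hx
    constructor
    · linarith [csInf_le hcpt.bddBelow hx]
    · linarith [le_csSup hcpt.bddAbove hx]
  have hS : S ≤ ‖a‖ :=
    (Real.le_norm_self S).trans (spectrum.norm_le_norm_of_mem (hcpt.sSup_mem hne))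
  linarith [ha.norm_sub_smul_starProjection_le hp hball]

end IsSelfAdjoint

lemma IsCompactOperator.tendsto_comp_of_tendsto_apply_s17 {α 𝕜 E F G : Type*} [RCLike 𝕜]
    [NormedAddCommGroup E] [NormedSpace 𝕜 E] [NormedAddCommGroup F] [NormedSpace 𝕜 F]
    [NormedAddCommGroup G] [NormedSpace 𝕜 G] {B : E →L[𝕜] F} (hB : IsCompactOperator B)
    {l : Filter α} {Q : α → F →L[𝕜] G} {C : ℝ≥0} (hQ : ∀ i, ‖Q i‖₊ ≤ C)
    (hQ0 : ∀ y, Tendsto (fun i => Q i y) l (𝓝 0)) :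
    Tendsto (fun i => (Q i).comp B) l (𝓝 0) := by
  obtain ⟨K, hK, hBK⟩ := hB.image_closedBall_subset_compact (1 : ℝ)
  have : CompactSpace K := isCompact_iff_compactSpace.mp hK
  have hequi : Equicontinuous fun i (y : K) => Q i y :=
    (LipschitzWith.uniformEquicontinuous _ C fun i => by
      have h := ((Q i).lipschitz.weaken (hQ i)).comp (LipschitzWith.subtype_val K)
      rw [mul_one] at h
      exact h).equicontinuous
  -- Ascoli: on the compact set `K`, pointwise convergence of an equicontinuous family is uniform.
  have hunif : TendstoUniformly (fun i (y : K) => Q i y) 0 l :=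
    UniformFun.tendsto_iff_tendstoUniformly.mp <|
      (hequi.tendsto_uniformFun_iff_pi l 0).mpr (tendsto_pi_nhds.mpr fun y => hQ0 y)
  refine NormedAddGroup.tendsto_nhds_zero.mpr fun ε hε => ?_
  filter_upwards [Metric.tendstoUniformly_iff.mp hunif (ε / 2) (half_pos hε)] with i hi
  refine lt_of_le_of_lt ?_ (half_lt_self hε)
  refine ContinuousLinearMap.opNorm_le_of_unit_norm (half_pos hε).le fun x hx => ?_
  simpa using (hi ⟨B x, hBK ⟨x, by simp [hx], rfl⟩⟩).le

namespace HilbertBasis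

variable {ι 𝕜 E : Type*} [RCLike 𝕜] [NormedAddCommGroup E] [InnerProductSpace 𝕜 E]
  (e : HilbertBasis ι 𝕜 E)

instance (s : Finset ι) : FiniteDimensional 𝕜 (span 𝕜 (e '' s)) :=
  FiniteDimensional.span_of_finite 𝕜 (s.finite_toSet.image e)

def proj (s : Finset ι) : E →L[𝕜] E := (span 𝕜 (e '' s)).starProjection

lemma isStarProjection_proj [CompleteSpace E] (s : Finset ι) : IsStarProjection (e.proj s) :=
  isStarProjection_starProjection

lemma proj_apply_of_mem {s : Finset ι} {i : ι} (hi : i ∈ s) : e.proj s (e i) = e i :=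
  starProjection_eq_self_iff.mpr (subset_span ⟨i, hi, rfl⟩)

lemma proj_apply_of_notMem {s : Finset ι} {i : ι} (hi : i ∉ s) : e.proj s (e i) = 0 := by
  refine (starProjection_apply_eq_zero_iff _).mpr (IsOrtho.le ?_ (mem_span_singleton_self (e i)))
  rw [isOrtho_span]
  rintro _ rfl _ ⟨j, hj, rfl⟩
  exact e.orthonormal.2 (ne_of_mem_of_not_mem hj hi).symm

lemma isCompactOperator_proj (s : Finset ι) : IsCompactOperator (e.proj s) :=
  (isCompactOperator_of_locallyCompactSpace_dom
    (span 𝕜 (e '' s)).orthogonalProjectionOnto).clm_comp (span 𝕜 (e '' s)).subtypeL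

lemma tendsto_proj (x : E) : Tendsto (fun s => e.proj s x) atTop (𝓝 x) := by
  refine starProjection_tendsto_self (fun s : Finset ι => span 𝕜 (e '' s))
    (fun s t hst => span_mono (Set.image_mono hst)) x ?_
  have hle : span 𝕜 (Set.range e) ≤ ⨆ s : Finset ι, span 𝕜 (e '' s) := span_le.mpr <| by
    rintro _ ⟨i, rfl⟩
    exact mem_iSup_of_mem {i} (subset_span ⟨i, by simp, rfl⟩)
  exact e.dense_span.ge.trans (topologicalClosure_mono hle)

end HilbertBasis

namespace RealDiag

variable {E : Type*} [NormedAddCommGroup E] [InnerProductSpace ℂ E] {e : HilbertBasis ℕ ℂ E}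
  {D D' : E →L[ℂ] E}

lemma add (hD : RealDiag e D) (hD' : RealDiag e D') : RealDiag e (D + D') := fun n => by
  obtain ⟨d, hd⟩ := hD n
  obtain ⟨d', hd'⟩ := hD' n
  exact ⟨d + d', by simp [hd, hd', add_smul]⟩

lemma neg (hD : RealDiag e D) : RealDiag e (-D) := fun n => by
  obtain ⟨d, hd⟩ := hD n
  exact ⟨-d, by simp [hd]⟩

lemma isSelfAdjoint [CompleteSpace E] (hD : RealDiag e D) : IsSelfAdjoint D := by
  rw [isSelfAdjoint_iff']
  refine ext_on (dense_iff_topologicalClosure_eq_top.mpr e.dense_span) ?_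
  rintro _ ⟨n, rfl⟩
  refine e.repr.injective (lp.ext (funext fun m => ?_))
  simp only [HilbertBasis.repr_apply_apply, adjoint_inner_right]
  obtain ⟨d, hd⟩ := hD n
  rcases eq_or_ne m n with rfl | hmn
  · rw [hd, inner_smul_left, inner_smul_right, Complex.conj_ofReal]
  · obtain ⟨d', hd'⟩ := hD m
    rw [hd, hd', inner_smul_left, inner_smul_right, e.orthonormal.2 hmn, mul_zero, mul_zero]

end RealDiag

variable {E : Type*} [NormedAddCommGroup E] [InnerProductSpace ℂ E]

lemma realDiag_smul_proj (e : HilbertBasis ℕ ℂ E) (t : ℝ) (s : Finset ℕ) :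
    RealDiag e (t • e.proj s) := fun n => by
  by_cases hn : n ∈ s
  · exact ⟨t, by simp [e.proj_apply_of_mem hn, Complex.coe_smul]⟩
  · exact ⟨0, by simp [e.proj_apply_of_notMem hn]⟩

def IsRealDiagMinimal (e : HilbertBasis ℕ ℂ E) (B : E →L[ℂ] E) : Prop :=
  ∀ D : E →L[ℂ] E, IsCompactOperator D → RealDiag e D → ‖B‖ ≤ ‖B + D‖

namespace IsRealDiagMinimal

variable {e : HilbertBasis ℕ ℂ E} {B : E →L[ℂ] E}

lemma neg (hB : IsRealDiagMinimal e B) : IsRealDiagMinimal e (-B) := fun D hDc hDd => by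
  have h := hB (-D) hDc.neg hDd.neg
  rwa [← norm_neg B, ← norm_neg (B + -D), neg_add, neg_neg] at h

lemma sInf_add_sSup_nonpos [CompleteSpace E] (hB : IsRealDiagMinimal e B)
    (hc : IsCompactOperator B) (hsa : IsSelfAdjoint B) :
    sInf (spectrum ℝ B) + sSup (spectrum ℝ B) ≤ 0 := by
  by_contra! hpos
  have htail : Tendsto (fun s => ‖(1 - e.proj s) * B‖) atTop (𝓝 0) := by
    have h := (hc.tendsto_comp_of_tendsto_apply_s17 (C := 1)
      (fun s => by
        rw [← NNReal.coe_le_coe, coe_nnnorm, NNReal.coe_one]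
        exact (e.isStarProjection_proj s).one_sub.norm_le)
      (fun y => by simpa using (tendsto_const_nhds (x := y)).sub (e.tendsto_proj y))).norm
    rw [norm_zero] at h
    exact h
  obtain ⟨s, hs⟩ := (htail.eventually
    (gt_mem_nhds (by positivity : 0 < (sInf (spectrum ℝ B) + sSup (spectrum ℝ B)) / 4))).exists
  set t := (sInf (spectrum ℝ B) + sSup (spectrum ℝ B)) / 2
  have hlt : ‖B - t • e.proj s‖ < ‖B‖ :=
    hsa.norm_sub_smul_starProjection_lt (e.isStarProjection_proj s) (by linarith)
  have hle := hB _ ((e.isCompactOperator_proj s).smul t).neg (realDiag_smul_proj e t s).neg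
  rw [← sub_eq_add_neg] at hle
  linarith

end IsRealDiagMinimal

theorem stmt_17_general (e : HilbertBasis ℕ ℂ H) (C D₁ : H →L[ℂ] H)
    (hcomp : IsCompactOperator ⇑C) (hsa : IsSelfAdjoint C)
    (hD₁c : IsCompactOperator ⇑D₁) (hD₁ : RealDiag e D₁)
    (hmin : ∀ D : H →L[ℂ] H, IsCompactOperator ⇑D → RealDiag e D →
      ‖C + D₁‖ ≤ ‖C + D‖) :
    sInf (spectrum ℝ (C + D₁)) + sSup (spectrum ℝ (C + D₁)) = 0 := by
  have hB : IsRealDiagMinimal e (C + D₁) := fun D hDc hDd => by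
    simpa [add_assoc] using hmin (D₁ + D) (hD₁c.add hDc) (hD₁.add hDd)
  have hc : IsCompactOperator (C + D₁) := hcomp.add hD₁c
  have hsa' : IsSelfAdjoint (C + D₁) := hsa.add hD₁.isSelfAdjoint
  have h₁ := hB.sInf_add_sSup_nonpos hc hsa'
  have h₂ := hB.neg.sInf_add_sSup_nonpos hc.neg hsa'.neg
  rw [← spectrum.neg_eq, Real.sInf_neg, Real.sSup_neg] at h₂
  linarith

/-- if `C + D₁` is minimal and nonzero then
`λ_min(C+D₁) + λ_max(C+D₁) = 0`. -/
theorem stmt_17 (e : HilbertBasis ℕ ℂ H) (C D₁ : H →L[ℂ] H)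
    (hcomp : IsCompactOperator ⇑C) (hsa : IsSelfAdjoint C)
    (hD₁c : IsCompactOperator ⇑D₁) (hD₁ : RealDiag e D₁)
    (hne : C + D₁ ≠ 0)
    (hmin : ∀ D : H →L[ℂ] H, IsCompactOperator ⇑D → RealDiag e D →
      ‖C + D₁‖ ≤ ‖C + D‖) :
    sInf (spectrum ℝ (C + D₁)) + sSup (spectrum ℝ (C + D₁)) = 0 :=
  stmt_17_general e C D₁ hcomp hsa hD₁c hD₁ hmin
end
end
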